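/- There is an isomorphism of ℂ-algebras ℂ[x,y]/(2x³ − 3xy², 3x²y − 4y³) ≅ ℂ[u,v]/(u³ − (9/4)uv² + (13/4)v³, 5v³ − 6uv² + 3u²v) sending the class of x to the class of v and the class of y to the class of I(v−u), where I is the imaginary unit of ℂ. -/
import Mathlib


open MvPolynomial

noncomputable section

/-- The ideal (R₁, R₂) ⊆ ℂ[x,y] with R₁ = 2x³ − 3xy², R₂ = 3x²y − 4y³
(x = X 0, y = X 1). -/
def idealXY : Ideal (MvPolynomial (Fin 2) ℂ) :=
  Ideal.span {2 * X 0 ^ 3 - 3 * X 0 * X 1 ^ 2, 3 * X 0 ^ 2 * X 1 - 4 * X 1 ^ 3}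

/-- The ideal (S₁, S₂) ⊆ ℂ[u,v] with S₁ = u³ − (9/4)uv² + (13/4)v³,
S₂ = 5v³ − 6uv² + 3u²v (u = X 0, v = X 1). -/
def idealUV : Ideal (MvPolynomial (Fin 2) ℂ) :=
  Ideal.span {X 0 ^ 3 - C (9 / 4 : ℂ) * X 0 * X 1 ^ 2 + C (13 / 4 : ℂ) * X 1 ^ 3,
    5 * X 1 ^ 3 - 6 * X 0 * X 1 ^ 2 + 3 * X 0 ^ 2 * X 1}

/-- forward substitution: x ↦ v, y ↦ I(v−u) -/
def fwd : MvPolynomial (Fin 2) ℂ →ₐ[ℂ] MvPolynomial (Fin 2) ℂ :=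
  aeval ![X 1, C Complex.I * (X 1 - X 0)]

/-- backward substitution: u ↦ x + I y, v ↦ x -/
def bwd : MvPolynomial (Fin 2) ℂ →ₐ[ℂ] MvPolynomial (Fin 2) ℂ :=
  aeval ![X 0 + C Complex.I * X 1, X 0]

lemma hI : (C Complex.I : MvPolynomial (Fin 2) ℂ) * C Complex.I = -1 := by
  rw [← C_mul, Complex.I_mul_I, map_neg, map_one]

lemma hC9 : (C (9/4 : ℂ) : MvPolynomial (Fin 2) ℂ) * 4 = 9 := by
  rw [show (4 : MvPolynomial (Fin 2) ℂ) = C 4 from (map_ofNat C 4).symm, ← C_mul,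
    show (9/4 : ℂ) * 4 = 9 by norm_num]
  exact map_ofNat C 9

lemma hC13 : (C (13/4 : ℂ) : MvPolynomial (Fin 2) ℂ) * 4 = 13 := by
  rw [show (4 : MvPolynomial (Fin 2) ℂ) = C 4 from (map_ofNat C 4).symm, ← C_mul,
    show (13/4 : ℂ) * 4 = 13 by norm_num]
  exact map_ofNat C 13

lemma hC14 : (C (1/4 : ℂ) : MvPolynomial (Fin 2) ℂ) * 4 = 1 := by
  rw [show (4 : MvPolynomial (Fin 2) ℂ) = C 4 from (map_ofNat C 4).symm, ← C_mul,
    show (1/4 : ℂ) * 4 = 1 by norm_num, map_one]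

lemma hb : (C (9/4 : ℂ) : MvPolynomial (Fin 2) ℂ) = 9 * C (1/4 : ℂ) := by
  rw [show (9 : MvPolynomial (Fin 2) ℂ) = C 9 from (map_ofNat C 9).symm, ← C_mul]
  norm_num

lemma hc : (C (13/4 : ℂ) : MvPolynomial (Fin 2) ℂ) = 13 * C (1/4 : ℂ) := by
  rw [show (13 : MvPolynomial (Fin 2) ℂ) = C 13 from (map_ofNat C 13).symm, ← C_mul]
  norm_num

lemma g1_mem : (X 0 ^ 3 - C (9 / 4 : ℂ) * X 0 * X 1 ^ 2 + C (13 / 4 : ℂ) * X 1 ^ 3 :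
    MvPolynomial (Fin 2) ℂ) ∈ idealUV :=
  Ideal.subset_span (Set.mem_insert _ _)

lemma g2_mem : (5 * X 1 ^ 3 - 6 * X 0 * X 1 ^ 2 + 3 * X 0 ^ 2 * X 1 :
    MvPolynomial (Fin 2) ℂ) ∈ idealUV :=
  Ideal.subset_span (Set.mem_insert_of_mem _ rfl)

lemma r1_mem : (2 * X 0 ^ 3 - 3 * X 0 * X 1 ^ 2 : MvPolynomial (Fin 2) ℂ) ∈ idealXY :=
  Ideal.subset_span (Set.mem_insert _ _)

lemma r2_mem : (3 * X 0 ^ 2 * X 1 - 4 * X 1 ^ 3 : MvPolynomial (Fin 2) ℂ) ∈ idealXY :=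
  Ideal.subset_span (Set.mem_insert_of_mem _ rfl)

lemma fwd_r1 : fwd (2 * X 0 ^ 3 - 3 * X 0 * X 1 ^ 2) =
    5 * X 1 ^ 3 - 6 * X 0 * X 1 ^ 2 + 3 * X 0 ^ 2 * X 1 := by
  simp only [fwd, map_sub, map_mul, map_pow, map_ofNat, aeval_X, Matrix.cons_val_zero,
    Matrix.cons_val_one, Matrix.head_cons]
  linear_combination (-3 * X 1 * (X 1 - X 0) ^ 2) * hI

lemma fwd_r2 : fwd (3 * X 0 ^ 2 * X 1 - 4 * X 1 ^ 3) =
    C Complex.I * ((-(4 : MvPolynomial (Fin 2) ℂ)) *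
      (X 0 ^ 3 - C (9 / 4 : ℂ) * X 0 * X 1 ^ 2 + C (13 / 4 : ℂ) * X 1 ^ 3) +
      4 * (5 * X 1 ^ 3 - 6 * X 0 * X 1 ^ 2 + 3 * X 0 ^ 2 * X 1)) := by
  simp only [fwd, map_sub, map_mul, map_pow, map_ofNat, aeval_X, Matrix.cons_val_zero,
    Matrix.cons_val_one, Matrix.head_cons]
  linear_combination (-4 * C Complex.I * (X 1 - X 0) ^ 3) * hI +
    (C Complex.I * X 0 * X 1 ^ 2 - 2 * C Complex.I * X 0 * X 1 ^ 2) * hC9 + (-(C Complex.I) * X 1 ^ 3 + 2 * C Complex.I * X 1 ^ 3) * hC13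

lemma bwd_s1 : bwd (X 0 ^ 3 - C (9 / 4 : ℂ) * X 0 * X 1 ^ 2 + C (13 / 4 : ℂ) * X 1 ^ 3) =
    (2 * X 0 ^ 3 - 3 * X 0 * X 1 ^ 2) +
      (C Complex.I * C (1/4 : ℂ)) * (3 * X 0 ^ 2 * X 1 - 4 * X 1 ^ 3) := by
  simp only [bwd, map_add, map_sub, map_mul, map_pow, map_ofNat, aeval_X, aeval_C,
    algebraMap_eq, Matrix.cons_val_zero, Matrix.cons_val_one, Matrix.head_cons]
  linear_combination (3 * X 0 * X 1 ^ 2 + C Complex.I * X 1 ^ 3) * hI +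
    (-(X 0 ^ 3) - C Complex.I * X 0 ^ 2 * X 1) * hb + (X 0 ^ 3) * hc +
    (X 0 ^ 3 - 3 * C Complex.I * X 0 ^ 2 * X 1 + C Complex.I * X 1 ^ 3) * hC14

lemma bwd_s2 : bwd (5 * X 1 ^ 3 - 6 * X 0 * X 1 ^ 2 + 3 * X 0 ^ 2 * X 1) =
    2 * X 0 ^ 3 - 3 * X 0 * X 1 ^ 2 := by
  simp only [bwd, map_add, map_sub, map_mul, map_pow, map_ofNat, aeval_X, aeval_C,
    algebraMap_eq, Matrix.cons_val_zero, Matrix.cons_val_one, Matrix.head_cons]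
  linear_combination (3 * X 0 * X 1 ^ 2) * hI

lemma fwd_ker : ∀ a ∈ idealXY, ((Ideal.Quotient.mkₐ ℂ idealUV).comp fwd) a = 0 := by
  have hle : idealXY ≤ RingHom.ker ((Ideal.Quotient.mkₐ ℂ idealUV).comp fwd) := by
    rw [idealXY, Ideal.span_le]
    rintro p hp
    simp only [Set.mem_insert_iff, Set.mem_singleton_iff] at hp
    have : ((Ideal.Quotient.mkₐ ℂ idealUV).comp fwd) p = Ideal.Quotient.mk idealUV (fwd p) :=
      rfl
    rcases hp with rfl | rfl <;>
      simp only [SetLike.mem_coe, RingHom.mem_ker, this, Ideal.Quotient.eq_zero_iff_mem]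
    · rw [fwd_r1]; exact g2_mem
    · rw [fwd_r2]
      exact Ideal.mul_mem_left _ _ (Ideal.add_mem _
        (Ideal.mul_mem_left _ _ g1_mem) (Ideal.mul_mem_left _ _ g2_mem))
  exact fun a ha => hle ha

lemma bwd_ker : ∀ a ∈ idealUV, ((Ideal.Quotient.mkₐ ℂ idealXY).comp bwd) a = 0 := by
  have hle : idealUV ≤ RingHom.ker ((Ideal.Quotient.mkₐ ℂ idealXY).comp bwd) := by
    rw [idealUV, Ideal.span_le]
    rintro p hp
    simp only [Set.mem_insert_iff, Set.mem_singleton_iff] at hp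
    have : ((Ideal.Quotient.mkₐ ℂ idealXY).comp bwd) p = Ideal.Quotient.mk idealXY (bwd p) :=
      rfl
    rcases hp with rfl | rfl <;>
      simp only [SetLike.mem_coe, RingHom.mem_ker, this, Ideal.Quotient.eq_zero_iff_mem]
    · rw [bwd_s1]; exact Ideal.add_mem _ r1_mem (Ideal.mul_mem_left _ _ r2_mem)
    · rw [bwd_s2]; exact r1_mem
  exact fun a ha => hle ha

/-- induced map on quotients, forward -/
def F : (MvPolynomial (Fin 2) ℂ ⧸ idealXY) →ₐ[ℂ] (MvPolynomial (Fin 2) ℂ ⧸ idealUV) :=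
  Ideal.Quotient.liftₐ idealXY ((Ideal.Quotient.mkₐ ℂ idealUV).comp fwd) fwd_ker

/-- induced map on quotients, backward -/
def G : (MvPolynomial (Fin 2) ℂ ⧸ idealUV) →ₐ[ℂ] (MvPolynomial (Fin 2) ℂ ⧸ idealXY) :=
  Ideal.Quotient.liftₐ idealUV ((Ideal.Quotient.mkₐ ℂ idealXY).comp bwd) bwd_ker

lemma F_mk (p : MvPolynomial (Fin 2) ℂ) :
    F (Ideal.Quotient.mk idealXY p) = Ideal.Quotient.mk idealUV (fwd p) := rfl

lemma G_mk (p : MvPolynomial (Fin 2) ℂ) :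
    G (Ideal.Quotient.mk idealUV p) = Ideal.Quotient.mk idealXY (bwd p) := rfl

lemma GF : G.comp F = AlgHom.id ℂ _ := by
  apply Ideal.Quotient.algHom_ext
  apply MvPolynomial.algHom_ext
  intro i
  fin_cases i <;>
    simp only [AlgHom.coe_comp, Function.comp_apply, Ideal.Quotient.mkₐ_eq_mk,
      AlgHom.id_apply, F_mk, G_mk]
  · have : bwd (fwd (X 0)) = X 0 := by
      simp [fwd, bwd]
    exact congrArg _ this
  · have : bwd (fwd (X 1)) = X 1 := by
      simp only [fwd, bwd, map_mul, map_sub, aeval_X, aeval_C, algebraMap_eq,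
        Matrix.cons_val_zero, Matrix.cons_val_one, Matrix.head_cons]
      linear_combination (-(X 1)) * hI
    exact congrArg _ this

lemma FG : F.comp G = AlgHom.id ℂ _ := by
  apply Ideal.Quotient.algHom_ext
  apply MvPolynomial.algHom_ext
  intro i
  fin_cases i <;>
    simp only [AlgHom.coe_comp, Function.comp_apply, Ideal.Quotient.mkₐ_eq_mk,
      AlgHom.id_apply, F_mk, G_mk]
  · have : fwd (bwd (X 0)) = X 0 := by
      simp only [fwd, bwd, map_add, map_mul, aeval_X, aeval_C, algebraMap_eq,
        Matrix.cons_val_zero, Matrix.cons_val_one, Matrix.head_cons]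
      linear_combination (X 1 - X 0) * hI
    exact congrArg _ this
  · have : fwd (bwd (X 1)) = X 1 := by
      simp [fwd, bwd]
    exact congrArg _ this

/-- There is a ℂ-algebra isomorphism
ℂ[x,y]/(2x³ − 3xy², 3x²y − 4y³) ≅ ℂ[u,v]/(u³ − (9/4)uv² + (13/4)v³, 5v³ − 6uv² + 3u²v)
sending x̄ ↦ v̄ and ȳ ↦ I(v̄ − ū). -/
theorem crepant_chow_ring_iso :
    ∃ e : (MvPolynomial (Fin 2) ℂ ⧸ idealXY) ≃ₐ[ℂ] (MvPolynomial (Fin 2) ℂ ⧸ idealUV),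
      e (Ideal.Quotient.mk idealXY (X 0)) = Ideal.Quotient.mk idealUV (X 1) ∧
      e (Ideal.Quotient.mk idealXY (X 1)) =
        Ideal.Quotient.mk idealUV (C Complex.I * (X 1 - X 0)) := by
  refine ⟨AlgEquiv.ofAlgHom F G FG GF, ?_, ?_⟩
  · show F (Ideal.Quotient.mk idealXY (X 0)) = _
    rw [F_mk]
    congr 1
    simp [fwd]
  · show F (Ideal.Quotient.mk idealXY (X 1)) = _
    rw [F_mk]
    congr 1
    simp [fwd]

end
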